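/- Let L > 0 and let a : ℝ → ℝ be continuously differentiable on [0,L] with a(0) = a(L) = 0 and a(s) > 0 for all s ∈ (0,L). Then ∫_{L/2}^s 1/a(u) du tends to +∞ as s tends to L from the left, and tends to −∞ as s tends to 0 from the right. -/

import Mathlib

/-!
A `C¹` function on `[0, L]` is Lipschitz there, say with constant `K`; since `a` vanishes at both
endpoints this gives `a u ≤ K (L - u)` and `a u ≤ K u`. So `1 / a` dominates `1 / (K (L - u))` near
`L` and `1 / (K u)` near `0`, whose integrals diverge logarithmically.
-/

open Filter Set Topology intervalIntegral

theorem tendsto_sub_nhdsLT_nhdsGT_zero (b : ℝ) : Tendsto (fun s => b - s) (𝓝[<] b) (𝓝[>] 0) := by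
  refine tendsto_nhdsWithin_of_tendsto_nhds_of_eventually_within _ ?_ ?_
  · have h : Tendsto (fun s => b - s) (𝓝 b) (𝓝 (b - b)) := tendsto_const_nhds.sub tendsto_id
    simpa using h.mono_left nhdsWithin_le_nhds
  · filter_upwards [self_mem_nhdsWithin] with s (hs : s < b) using sub_pos.2 hs

theorem tendsto_integral_one_div_atTop_of_le_mul_sub {a : ℝ → ℝ} {m b C : ℝ} (hmb : m < b)
    (hcont : ContinuousOn a (Ico m b)) (hpos : ∀ u ∈ Ico m b, 0 < a u)
    (hle : ∀ u ∈ Ico m b, a u ≤ C * (b - u)) :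
    Tendsto (fun s => ∫ u in m..s, 1 / a u) (𝓝[<] b) atTop := by
  have hm : m ∈ Ico m b := left_mem_Ico.2 hmb
  have hC : 0 < C := pos_of_mul_pos_left ((hpos m hm).trans_le (hle m hm)) (sub_pos.2 hmb).le
  have hlog : Tendsto (fun s => C⁻¹ * Real.log ((b - m) / (b - s))) (𝓝[<] b) atTop := by
    refine (Real.tendsto_log_atTop.comp ?_).const_mul_atTop (inv_pos.2 hC)
    exact ((tendsto_inv_nhdsGT_zero.comp (tendsto_sub_nhdsLT_nhdsGT_zero b)).const_mul_atTop
      (sub_pos.2 hmb)).congr fun s => (div_eq_mul_inv _ _).symm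
  refine tendsto_atTop_mono' _ ?_ hlog
  filter_upwards [Ioo_mem_nhdsLT hmb] with s hs
  have hsub : uIcc m s ⊆ Ico m b := by
    rw [uIcc_of_le hs.1.le]; exact Icc_subset_Ico_right hs.2
  calc C⁻¹ * Real.log ((b - m) / (b - s)) = ∫ u in m..s, 1 / (C * (b - u)) := by
        simp_rw [one_div, mul_inv]
        rw [integral_const_mul, integral_comp_sub_left (fun x => x⁻¹),
          integral_inv_of_pos (sub_pos.2 hs.2) (sub_pos.2 hmb)]
    _ ≤ ∫ u in m..s, 1 / a u := by
        refine integral_mono_on hs.1.le ?_ ?_ fun u hu => ?_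
        · refine ContinuousOn.intervalIntegrable (continuousOn_const.div (by fun_prop) ?_)
          intro u hu
          have := sub_pos.2 (hsub hu).2
          positivity
        · exact ContinuousOn.intervalIntegrable
            (continuousOn_const.div (hcont.mono hsub) fun u hu => (hpos u (hsub hu)).ne')
        · have hu' : u ∈ Ico m b := hsub (Icc_subset_uIcc hu)
          exact one_div_le_one_div_of_le (hpos u hu') (hle u hu')

theorem tendsto_integral_one_div_atBot_of_le_mul_sub {a : ℝ → ℝ} {m b C : ℝ} (hbm : b < m)
    (hcont : ContinuousOn a (Ioc b m)) (hpos : ∀ u ∈ Ioc b m, 0 < a u)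
    (hle : ∀ u ∈ Ioc b m, a u ≤ C * (u - b)) :
    Tendsto (fun s => ∫ u in m..s, 1 / a u) (𝓝[>] b) atBot := by
  have hrefl : Tendsto (fun s => ∫ v in -m..s, 1 / a (-v)) (𝓝[<] (-b)) atTop := by
    exact tendsto_integral_one_div_atTop_of_le_mul_sub (C := C) (neg_lt_neg hbm)
      (hcont.comp continuousOn_neg fun v hv => neg_mem_Ioc_iff.2 hv)
      (fun v hv => hpos _ (neg_mem_Ioc_iff.2 hv))
      fun v hv => (hle _ (neg_mem_Ioc_iff.2 hv)).trans_eq (by ring)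
  refine (tendsto_neg_atTop_atBot.comp (hrefl.comp (neg_neg b ▸ tendsto_neg_nhdsGT_neg))).congr
    fun s => ?_
  simp only [Function.comp_apply]
  rw [integral_comp_neg (fun v => 1 / a v), neg_neg, neg_neg, integral_symm, neg_neg]

theorem LipschitzOnWith.le_mul_abs_sub_of_apply_eq_zero {f : ℝ → ℝ} {K : NNReal} {s : Set ℝ}
    {x y : ℝ} (hf : LipschitzOnWith K f s) (hx : x ∈ s) (hy : y ∈ s) (hfy : f y = 0) :
    f x ≤ K * |x - y| := by
  simpa [Real.dist_eq, hfy] using (le_abs_self _).trans (hf.dist_le_mul x hx y hy)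

/-- The key divergence step in Lemma 2.26: `∫_{L/2}^s 1/a(u) du → +∞` as `s → L⁻`
and `→ -∞` as `s → 0⁺`. -/
theorem stmt_1 (L : ℝ) (hL : 0 < L) (a : ℝ → ℝ)
    (ha : ContDiffOn ℝ 1 a (Set.Icc 0 L))
    (ha0 : a 0 = 0) (haL : a L = 0)
    (hapos : ∀ s ∈ Set.Ioo 0 L, 0 < a s) :
    Filter.Tendsto (fun s => ∫ u in (L/2)..s, 1 / a u)
        (nhdsWithin L (Set.Iio L)) Filter.atTop ∧
      Filter.Tendsto (fun s => ∫ u in (L/2)..s, 1 / a u)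
        (nhdsWithin 0 (Set.Ioi 0)) Filter.atBot := by
  obtain ⟨K, hK⟩ := ha.exists_lipschitzOnWith one_ne_zero (convex_Icc 0 L) isCompact_Icc
  have hright : Ico (L / 2) L ⊆ Ioo 0 L := fun u hu => ⟨by linarith [hu.1], hu.2⟩
  have hleft : Ioc 0 (L / 2) ⊆ Ioo 0 L := fun u hu => ⟨hu.1, by linarith [hu.2]⟩
  constructor
  · refine tendsto_integral_one_div_atTop_of_le_mul_sub (C := K) (half_lt_self hL)
      (ha.continuousOn.mono (hright.trans Ioo_subset_Icc_self)) (fun u hu => hapos u (hright hu))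
      fun u hu => ?_
    have hu' := hright hu
    rw [← abs_of_pos (sub_pos.2 hu'.2), abs_sub_comm]
    exact hK.le_mul_abs_sub_of_apply_eq_zero (Ioo_subset_Icc_self hu')
      (right_mem_Icc.2 hL.le) haL
  · refine tendsto_integral_one_div_atBot_of_le_mul_sub (C := K) (half_pos hL)
      (ha.continuousOn.mono (hleft.trans Ioo_subset_Icc_self)) (fun u hu => hapos u (hleft hu))
      fun u hu => ?_
    have hu' := hleft hu
    rw [← abs_of_pos (sub_pos.2 hu'.1)]
    exact hK.le_mul_abs_sub_of_apply_eq_zero (Ioo_subset_Icc_self hu')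
      (left_mem_Icc.2 hL.le) ha0
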